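/- The function Ψ(η) = 2e^{-η²/4} / (√π (γ - erf(η/2))), with constant γ > 1, satisfies the Riccati equation Ψ² - ηΨ = 2Ψ' for all real η. -/

import Mathlib

noncomputable def myErf (x : ℝ) : ℝ :=
  (2 / Real.sqrt Real.pi) * ∫ s in (0:ℝ)..x, Real.exp (-s ^ 2)

/-!
Write `Ψ = 2G/D` with `G η = e^{-η²/4}` and `D η = √π (γ - erf(η/2))`. Then `D' = -G` and
`G' = -(η/2) G`, so the quotient rule gives `Ψ' = (-η G D + 2 G²)/D² = (Ψ² - ηΨ)/2`.
The denominator stays positive because `erf ≤ 1`, as `∫₀ˣ e^{-s²} ≤ ∫₀^∞ e^{-s²} = √π/2`.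
-/

open Real MeasureTheory

lemma integral_exp_neg_sq_le (x : ℝ) : ∫ s in (0:ℝ)..x, exp (-s ^ 2) ≤ √π / 2 := by
  have hf : Integrable fun s : ℝ => exp (-s ^ 2) := by
    simpa using integrable_exp_neg_mul_sq one_pos
  have hIoi : ∫ s in Set.Ioi (0:ℝ), exp (-s ^ 2) = √π / 2 := by
    simpa using integral_gaussian_Ioi 1
  have htail : 0 ≤ ∫ s in Set.Ioi x, exp (-s ^ 2) :=
    setIntegral_nonneg measurableSet_Ioi fun s _ => (exp_pos _).le
  rw [← intervalIntegral.integral_Ioi_sub_Ioi' hf.integrableOn hf.integrableOn, hIoi]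
  linarith

lemma myErf_le_one (x : ℝ) : myErf x ≤ 1 :=
  calc myErf x ≤ 2 / √π * (√π / 2) :=
        mul_le_mul_of_nonneg_left (integral_exp_neg_sq_le x) (by positivity)
    _ = 1 := by field_simp

lemma hasDerivAt_myErf (x : ℝ) : HasDerivAt myErf (2 / √π * exp (-x ^ 2)) x := by
  have hcont : Continuous fun s : ℝ => exp (-s ^ 2) := by fun_prop
  exact (intervalIntegral.integral_hasDerivAt_right (hcont.intervalIntegrable 0 x)
    hcont.stronglyMeasurable.stronglyMeasurableAtFilter hcont.continuousAt).const_mul _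

lemma hasDerivAt_exp_neg_sq_div_four (x : ℝ) :
    HasDerivAt (fun η : ℝ => exp (-η ^ 2 / 4)) (-(x / 2) * exp (-x ^ 2 / 4)) x := by
  have h : HasDerivAt (fun η : ℝ => -η ^ 2 / 4) (-(x / 2)) x :=
    ((hasDerivAt_pow 2 x).neg.div_const 4).congr_deriv (by ring)
  simpa [mul_comm] using h.exp

lemma hasDerivAt_sqrt_pi_mul_sub_myErf_half (γ x : ℝ) :
    HasDerivAt (fun η : ℝ => √π * (γ - myErf (η / 2))) (-exp (-x ^ 2 / 4)) x := by
  refine ((((hasDerivAt_myErf (x / 2)).comp x ((hasDerivAt_id x).div_const 2)).const_sub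
    γ).const_mul √π).congr_deriv ?_
  have hπ : √π ≠ 0 := (sqrt_pos.mpr pi_pos).ne'
  rw [show -(x / 2) ^ 2 = -x ^ 2 / 4 by ring]
  field_simp

lemma hasDerivAt_two_mul_div_riccati {G D : ℝ → ℝ} {η : ℝ}
    (hG : HasDerivAt G (-(η / 2) * G η) η) (hD : HasDerivAt D (-G η) η) (hD0 : D η ≠ 0) :
    HasDerivAt (fun x => 2 * G x / D x)
      (((2 * G η / D η) ^ 2 - η * (2 * G η / D η)) / 2) η := by
  refine ((hG.const_mul 2).div hD hD0).congr_deriv ?_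
  field_simp
  ring

/-- The similarity profile `Ψ(η) = 2e^{-η²/4}/(√π (γ - erf(η/2)))`, `γ > 1`, satisfies
the Riccati equation `Ψ² - ηΨ = 2Ψ'` on ℝ. -/
theorem stmt2 (γ : ℝ) (hγ : 1 < γ) (Ψ : ℝ → ℝ)
    (hΨ : ∀ η : ℝ, Ψ η =
      2 * Real.exp (-η ^ 2 / 4) / (Real.sqrt Real.pi * (γ - myErf (η / 2)))) :
    ∀ η : ℝ, HasDerivAt Ψ ((Ψ η ^ 2 - η * Ψ η) / 2) η := by
  intro η
  obtain rfl : Ψ = fun x => 2 * exp (-x ^ 2 / 4) / (√π * (γ - myErf (x / 2))) := funext hΨ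
  have hD0 : √π * (γ - myErf (η / 2)) ≠ 0 :=
    (mul_pos (sqrt_pos.mpr pi_pos) (by linarith [myErf_le_one (η / 2)])).ne'
  exact hasDerivAt_two_mul_div_riccati (hasDerivAt_exp_neg_sq_div_four η)
    (hasDerivAt_sqrt_pi_mul_sub_myErf_half γ η) hD0
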